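/- arXiv:1212.0494 — 2 statements merged into one kernel-verified Lean document; each statement's English description precedes it below -/
import Mathlib

section
/- For 0 ≤ ε ≤ 1/2 and 0 < μ < 1 with (1+ε)μ ≤ 1, the binary relative entropy satisfies D((1−ε)μ‖μ) ≥ με²/4 and D((1+ε)μ‖μ) ≥ με²/4. -/
/-!
With `klFun x = x log x + 1 - x`, the relative entropy splits as
`D(α‖μ) = μ klFun(α/μ) + (1 - μ) klFun((1 - α)/(1 - μ))`. Dropping the nonnegative second term
reduces the bound to `klFun (1 + t) ≥ t² / 4` for `|t| ≤ 1`, which holds because `klFun 1 = 0`,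
`klFun' 1 = 0` and `klFun'' = 1 / x ≥ 1 / 2` on `(0, 2]`.
-/

noncomputable section

/-- Binary relative entropy (natural logarithm). -/
def relD (α μ : ℝ) : ℝ := α * Real.log (α / μ) + (1 - α) * Real.log ((1 - α) / (1 - μ))

open Real Set InformationTheory

lemma hasDerivAt_klFun_sub_sq {x : ℝ} (hx : x ≠ 0) :
    HasDerivAt (fun y ↦ klFun y - (y - 1) ^ 2 / 4) (log x - (x - 1) / 2) x := by
  have hsq : HasDerivAt (fun y : ℝ ↦ (y - 1) ^ 2 / 4) ((x - 1) / 2) x := by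
    refine (((hasDerivAt_id' x).sub_const 1).fun_pow 2 |>.div_const 4).congr_deriv ?_
    norm_num
    ring
  exact (hasDerivAt_klFun hx).sub hsq

lemma sq_sub_one_div_four_le_klFun {x : ℝ} (hx0 : 0 ≤ x) (hx2 : x ≤ 2) :
    (x - 1) ^ 2 / 4 ≤ klFun x := by
  set g : ℝ → ℝ := fun y ↦ klFun y - (y - 1) ^ 2 / 4
  have hg_cont : Continuous g := by fun_prop
  have hg' : ∀ y ∈ Ioo (0 : ℝ) 2, HasDerivAt g (log y - (y - 1) / 2) y :=
    fun y hy ↦ hasDerivAt_klFun_sub_sq hy.1.ne'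
  have hg1 : g 1 = 0 := by simp [g, klFun_one]
  suffices 0 ≤ g x by simpa [g, sub_nonneg] using this
  rcases le_total x 1 with hx1 | hx1
  · have hanti : AntitoneOn g (Icc 0 1) := by
      refine antitoneOn_of_hasDerivWithinAt_nonpos (f' := fun y ↦ log y - (y - 1) / 2)
        (convex_Icc 0 1) hg_cont.continuousOn (fun y hy ↦ ?_) (fun y hy ↦ ?_) <;>
        rw [interior_Icc] at hy
      · exact (hg' y ⟨hy.1, by linarith [hy.2]⟩).hasDerivWithinAt
      · linarith [log_le_sub_one_of_pos hy.1, hy.2]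
    simpa [hg1] using hanti ⟨hx0, hx1⟩ ⟨zero_le_one, le_rfl⟩ hx1
  · have hmono : MonotoneOn g (Icc 1 2) := by
      refine monotoneOn_of_hasDerivWithinAt_nonneg (f' := fun y ↦ log y - (y - 1) / 2)
        (convex_Icc 1 2) hg_cont.continuousOn (fun y hy ↦ ?_) (fun y hy ↦ ?_) <;>
        rw [interior_Icc] at hy
      · exact (hg' y ⟨by linarith [hy.1], hy.2⟩).hasDerivWithinAt
      · have hy0 : 0 < y := by linarith [hy.1]
        have : (y - 1) / 2 ≤ 1 - y⁻¹ := by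
          rw [show 1 - y⁻¹ = (y - 1) / y by field_simp]
          exact div_le_div_of_nonneg_left (by linarith [hy.1]) hy0 hy.2.le
        linarith [one_sub_inv_le_log_of_pos hy0]
    simpa [hg1] using hmono ⟨le_rfl, one_le_two⟩ ⟨hx1, hx2⟩ hx1

lemma relD_eq_klFun_add_klFun {α μ : ℝ} (hμ0 : 0 < μ) (hμ1 : μ < 1) :
    relD α μ = μ * klFun (α / μ) + (1 - μ) * klFun ((1 - α) / (1 - μ)) := by
  have : 1 - μ ≠ 0 := by linarith
  simp only [relD, klFun]
  field_simp
  ring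

lemma mul_klFun_div_le_relD {α μ : ℝ} (hμ0 : 0 < μ) (hμ1 : μ < 1) (hα : α ≤ 1) :
    μ * klFun (α / μ) ≤ relD α μ := by
  rw [relD_eq_klFun_add_klFun hμ0 hμ1, le_add_iff_nonneg_right]
  exact mul_nonneg (by linarith) (klFun_nonneg (div_nonneg (by linarith) (by linarith)))

lemma mul_sq_div_four_le_relD {t μ : ℝ} (ht : |t| ≤ 1) (hμ0 : 0 < μ) (hμ1 : μ < 1)
    (h1 : (1 + t) * μ ≤ 1) : μ * t ^ 2 / 4 ≤ relD ((1 + t) * μ) μ := by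
  obtain ⟨ht0, ht1⟩ := abs_le.mp ht
  calc μ * t ^ 2 / 4 = μ * (((1 + t) - 1) ^ 2 / 4) := by ring
    _ ≤ μ * klFun (1 + t) :=
      mul_le_mul_of_nonneg_left (sq_sub_one_div_four_le_klFun (by linarith) (by linarith)) hμ0.le
    _ = μ * klFun ((1 + t) * μ / μ) := by rw [mul_div_cancel_right₀ _ hμ0.ne']
    _ ≤ relD ((1 + t) * μ) μ := mul_klFun_div_le_relD hμ0 hμ1 h1

/-- For `0 ≤ ε ≤ 1/2` and `0 < μ < 1` with `(1+ε)μ ≤ 1`, the binary relative entropy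
satisfies `D((1−ε)μ‖μ) ≥ με²/4` and `D((1+ε)μ‖μ) ≥ με²/4`. -/
theorem relD_lower_bound (ε μ : ℝ) (hε0 : 0 ≤ ε) (hε : ε ≤ 1/2)
    (hμ0 : 0 < μ) (hμ1 : μ < 1) (h1 : (1 + ε) * μ ≤ 1) :
    μ * ε ^ 2 / 4 ≤ relD ((1 - ε) * μ) μ ∧ μ * ε ^ 2 / 4 ≤ relD ((1 + ε) * μ) μ := by
  have hε1 : |ε| ≤ 1 := by rw [abs_of_nonneg hε0]; linarith
  constructor
  · have h1' : (1 + -ε) * μ ≤ 1 := by nlinarith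
    simpa [← sub_eq_add_neg] using mul_sq_div_four_le_relD (by rwa [abs_neg]) hμ0 hμ1 h1'
  · exact mul_sq_div_four_le_relD hε1 hμ0 hμ1 h1
end
end

section
/- Any quantum ID-code with error ε for a Hilbert space K yields, via fingerprinting, a classical ID-code: if (E, D) is a quantum ID-code with error ε for K through channel N, and {|ψ_i⟩}_{i=1}^N ⊂ K is a set of unit vectors with |⟨ψ_i|ψ_j⟩|² ≤ δ for i ≠ j, then {(E(ψ_i), D_{ψ_i})}_{i=1}^N is a classical ID-code for N with error of first kind λ₁ = ε and error of second kind λ₂ = δ + ε. -/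
open Matrix
open scoped Kronecker ComplexOrder
noncomputable section

/-- The Choi matrix of a linear map between matrix algebras. -/
def choi {a b : ℕ} (Φ : Matrix (Fin a) (Fin a) ℂ →ₗ[ℂ] Matrix (Fin b) (Fin b) ℂ) :
    Matrix (Fin a × Fin b) (Fin a × Fin b) ℂ :=
  ∑ i, ∑ j, (Matrix.single i j (1 : ℂ)) ⊗ₖ Φ (Matrix.single i j 1)

/-- A linear map between matrix algebras is cptp iff its Choi matrix is positive
semidefinite (complete positivity) and it preserves the trace. -/
def IsCPTP {a b : ℕ} (Φ : Matrix (Fin a) (Fin a) ℂ →ₗ[ℂ] Matrix (Fin b) (Fin b) ℂ) : Prop :=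
  (choi Φ).PosSemidef ∧ ∀ ρ, (Φ ρ).trace = ρ.trace

/-- A density operator: positive semidefinite with unit trace. -/
def IsState {d : ℕ} (ρ : Matrix (Fin d) (Fin d) ℂ) : Prop := ρ.PosSemidef ∧ ρ.trace = 1

/-- The trace norm `‖X‖₁ = tr √(XᴴX)`. -/
def traceNorm {d : ℕ} (X : Matrix (Fin d) (Fin d) ℂ) : ℝ :=
  (((Matrix.posSemidef_conjTranspose_mul_self X).1.eigenvectorUnitary.1 *
    diagonal (((↑) : ℝ → ℂ) ∘ (Real.sqrt ∘ (Matrix.posSemidef_conjTranspose_mul_self X).1.eigenvalues)) *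
    (star (Matrix.posSemidef_conjTranspose_mul_self X).1.eigenvectorUnitary : Matrix (Fin d) (Fin d) ℂ)).trace).re

/-- Rank-one (outer product) matrix `|v⟩⟨v|`. -/
def outer {ι : Type*} [Fintype ι] (v : ι → ℂ) : Matrix ι ι ℂ :=
  Matrix.vecMulVec v (star v)

section Outer

variable {ι : Type*} [Fintype ι]

lemma star_dotProduct_self (ψ : ι → ℂ) : star ψ ⬝ᵥ ψ = ((∑ x, ‖ψ x‖ ^ 2 : ℝ) : ℂ) := by
  push_cast
  exact Finset.sum_congr rfl fun x _ => Complex.conj_mul' (ψ x)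

lemma trace_outer_mul_outer (ψ φ : ι → ℂ) :
    (outer ψ * outer φ).trace = ((‖star ψ ⬝ᵥ φ‖ ^ 2 : ℝ) : ℂ) := by
  rw [outer, outer, vecMulVec_mul_vecMulVec, trace_vecMulVec, dotProduct_smul, smul_eq_mul,
    dotProduct_star, dotProduct_comm φ, Complex.star_def, Complex.mul_conj',
    Complex.ofReal_pow]

lemma re_trace_outer_mul_outer (ψ φ : ι → ℂ) :
    ((outer ψ * outer φ).trace).re = ‖star ψ ⬝ᵥ φ‖ ^ 2 := by
  rw [trace_outer_mul_outer, Complex.ofReal_re]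

lemma re_trace_outer_mul_outer_self {ψ : ι → ℂ} (hψ : ∑ x, ‖ψ x‖ ^ 2 = 1) :
    ((outer ψ * outer ψ).trace).re = 1 := by
  rw [re_trace_outer_mul_outer, star_dotProduct_self, hψ]
  simp

end Outer

theorem quantum_id_code_to_classical_id_code_general
    {a b k : ℕ} (Φ : Matrix (Fin a) (Fin a) ℂ →ₗ[ℂ] Matrix (Fin b) (Fin b) ℂ)
    (E : (Fin k → ℂ) → Matrix (Fin a) (Fin a) ℂ)
    (D : (Fin k → ℂ) → Matrix (Fin b) (Fin b) ℂ)
    (ε : ℝ)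
    (hqid : ∀ ψ φ : Fin k → ℂ, (∑ i, ‖ψ i‖ ^ 2) = 1 →
      (∑ i, ‖φ i‖ ^ 2) = 1 →
      |((outer ψ * outer φ).trace).re - ((Φ (E ψ) * D φ).trace).re| ≤ ε)
    {N : ℕ} (ψs : Fin N → (Fin k → ℂ)) (δ : ℝ)
    (hunit : ∀ i, (∑ x, ‖ψs i x‖ ^ 2) = 1)
    (hfp : ∀ i j, i ≠ j → ‖∑ x, (starRingEnd ℂ) (ψs i x) * ψs j x‖ ^ 2 ≤ δ) :
    (∀ i, 1 - ε ≤ ((Φ (E (ψs i)) * D (ψs i)).trace).re) ∧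
    (∀ i j, i ≠ j → ((Φ (E (ψs i)) * D (ψs j)).trace).re ≤ δ + ε) := by
  refine ⟨fun i => ?_, fun i j hij => ?_⟩
  · have h := (abs_le.mp (hqid (ψs i) (ψs i) (hunit i) (hunit i))).2
    rw [re_trace_outer_mul_outer_self (hunit i)] at h
    linarith
  · have h := (abs_le.mp (hqid (ψs i) (ψs j) (hunit i) (hunit j))).1
    have hδ : ‖star (ψs i) ⬝ᵥ ψs j‖ ^ 2 ≤ δ := hfp i j hij
    rw [re_trace_outer_mul_outer] at h
    linarith

/-- A quantum ID-code with error `ε` composed with a fingerprinting set of pairwise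
almost orthogonal unit vectors (`|⟨ψᵢ|ψⱼ⟩|² ≤ δ` for `i ≠ j`) yields a classical
ID-code with errors of first kind `ε` and of second kind `δ + ε`. -/
theorem quantum_id_code_to_classical_id_code
    {a b k : ℕ} (Φ : Matrix (Fin a) (Fin a) ℂ →ₗ[ℂ] Matrix (Fin b) (Fin b) ℂ)
    (hΦ : IsCPTP Φ)
    (E : (Fin k → ℂ) → Matrix (Fin a) (Fin a) ℂ)
    (D : (Fin k → ℂ) → Matrix (Fin b) (Fin b) ℂ)
    (hE : ∀ ψ : Fin k → ℂ, (∑ i, ‖ψ i‖ ^ 2) = 1 → IsState (E ψ))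
    (hD0 : ∀ φ, (D φ).PosSemidef)
    (hD1 : ∀ φ, ((1 : Matrix (Fin b) (Fin b) ℂ) - D φ).PosSemidef)
    (ε : ℝ)
    (hqid : ∀ ψ φ : Fin k → ℂ, (∑ i, ‖ψ i‖ ^ 2) = 1 →
      (∑ i, ‖φ i‖ ^ 2) = 1 →
      |((outer ψ * outer φ).trace).re - ((Φ (E ψ) * D φ).trace).re| ≤ ε)
    {N : ℕ} (ψs : Fin N → (Fin k → ℂ)) (δ : ℝ)
    (hunit : ∀ i, (∑ x, ‖ψs i x‖ ^ 2) = 1)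
    (hfp : ∀ i j, i ≠ j → ‖∑ x, (starRingEnd ℂ) (ψs i x) * ψs j x‖ ^ 2 ≤ δ) :
    (∀ i, 1 - ε ≤ ((Φ (E (ψs i)) * D (ψs i)).trace).re) ∧
    (∀ i j, i ≠ j → ((Φ (E (ψs i)) * D (ψs j)).trace).re ≤ δ + ε) :=
  quantum_id_code_to_classical_id_code_general Φ E D ε hqid ψs δ hunit hfp
end
end
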